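/- arXiv:1602.02524 — 3 statements merged into one kernel-verified Lean document; each statement's English description precedes it below -/
import Mathlib

section
/- The Lyapunov equation A X + X Aᵀ + Q = 0 (in n×n real matrices) has a unique solution X if and only if A has no two eigenvalues λᵢ, λⱼ (possibly with i = j) satisfying λᵢ = -λⱼ. -/
open Matrix

/-- `A` is Sylvester: no two complex eigenvalues `λᵢ, λⱼ` (possibly `i = j`)
satisfy `λᵢ = -λⱼ`. -/
def IsSylvester {n : ℕ} (A : Matrix (Fin n) (Fin n) ℝ) : Prop :=
  ∀ μ ∈ spectrum ℂ (A.map (Complex.ofReal)),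
    ∀ ν ∈ spectrum ℂ (A.map (Complex.ofReal)), μ ≠ -ν

/-!
The equation is `L X = -Q` for the linear endomorphism `L X = A X + X Aᵀ` of a finite-dimensional
space, so a unique solution exists iff `L` is injective. Injectivity can be tested after
complexifying, since `L` commutes with taking real and imaginary parts entrywise.
Over `ℂ`, eigenvectors `A u = μ u`, `A v = -μ v` give the kernel element `u vᵀ`. Conversely,
`L X = 0` says `A X = X (-Aᵀ)`, hence `χ(A) X = X χ(-Aᵀ) = 0` for `χ` the characteristic
polynomial of `-Aᵀ`; when the spectra of `A` and `-Aᵀ` are disjoint, `χ` is coprime to the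
characteristic polynomial of `A`, so `χ(A)` is invertible by Cayley–Hamilton and `X = 0`.
-/

open Polynomial Pointwise

theorem SemiconjBy.aeval_right {R A : Type*} [CommSemiring R] [Semiring A] [Algebra R A]
    {x a b : A} (h : SemiconjBy x a b) (p : R[X]) : SemiconjBy x (aeval a p) (aeval b p) := by
  induction p using Polynomial.induction_on' with
  | add p q hp hq => simpa only [map_add] using hp.add_right hq
  | monomial k r =>
    simpa only [aeval_monomial] using
      SemiconjBy.mul_right (Algebra.commute_algebraMap_right r x) (h.pow_right k)

theorem LinearMap.existsUnique_add_eq_zero_iff_injective {K V : Type*} [DivisionRing K]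
    [AddCommGroup V] [Module K V] [FiniteDimensional K V] (f : V →ₗ[K] V) (q : V) :
    (∃! x, f x + q = 0) ↔ Function.Injective f := by
  constructor
  · rintro ⟨x, hx, hunique⟩
    refine (injective_iff_map_eq_zero f).2 fun y hy => ?_
    have : x + y = x := hunique _ (by simp only [map_add, hy, add_zero, hx])
    simpa using this
  · intro hf
    obtain ⟨x, hx⟩ := LinearMap.injective_iff_surjective.1 hf (-q)
    refine ⟨x, by simp only [hx, neg_add_cancel], fun y hy => hf ?_⟩
    rw [hx, eq_neg_of_add_eq_zero_left hy]

namespace Matrix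

variable {ι : Type*} [Fintype ι]

section Lyapunov

variable {R S : Type*} [CommSemiring R] [CommSemiring S]

def lyapunovMap (A : Matrix ι ι R) : Matrix ι ι R →ₗ[R] Matrix ι ι R :=
  LinearMap.mulLeft R A + LinearMap.mulRight R Aᵀ

@[simp]
theorem lyapunovMap_apply (A X : Matrix ι ι R) : lyapunovMap A X = A * X + X * Aᵀ := rfl

theorem lyapunovMap_vecMulVec {A : Matrix ι ι R} {u v : ι → R} {μ ν : R} (hu : A *ᵥ u = μ • u)
    (hv : A *ᵥ v = ν • v) : lyapunovMap A (vecMulVec u v) = (μ + ν) • vecMulVec u v := by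
  rw [lyapunovMap_apply, mul_vecMulVec, vecMulVec_mul, vecMul_transpose, hu, hv, smul_vecMulVec,
    vecMulVec_smul, add_smul]

theorem lyapunovMap_map (f : R →+* S) (A X : Matrix ι ι R) :
    lyapunovMap (A.map f) (X.map f) = (lyapunovMap A X).map f := by
  rw [lyapunovMap_apply, lyapunovMap_apply, Matrix.map_add _ (map_add f), Matrix.map_mul,
    Matrix.map_mul, transpose_map]

theorem map_lyapunovMap_map_algebraMap [Algebra R S] (f : S →ₗ[R] R) (A : Matrix ι ι R)
    (X : Matrix ι ι S) :
    (lyapunovMap (A.map (algebraMap R S)) X).map f = lyapunovMap A (X.map f) := by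
  ext i j
  simp [mul_apply, mul_comm (X _ _), ← Algebra.smul_def, mul_comm _ (A _ _)]

end Lyapunov

theorem injective_lyapunovMap_map_ofReal_iff (A : Matrix ι ι ℝ) :
    Function.Injective (lyapunovMap (A.map Complex.ofReal)) ↔
      Function.Injective (lyapunovMap A) := by
  simp only [injective_iff_map_eq_zero]
  refine ⟨fun hC X hX => ?_, fun hR X hX => ?_⟩
  · refine map_injective Complex.ofReal_injective (hC _ ?_)
    change lyapunovMap (A.map Complex.ofRealHom) (X.map Complex.ofRealHom) = 0
    rw [lyapunovMap_map, hX, Matrix.map_zero _ (map_zero _)]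
  · rw [← Complex.coe_algebraMap] at hX
    have hre := hR _ (by
      rw [← map_lyapunovMap_map_algebraMap Complex.reLm, hX, Matrix.map_zero _ (map_zero _)])
    have him := hR _ (by
      rw [← map_lyapunovMap_map_algebraMap Complex.imLm, hX, Matrix.map_zero _ (map_zero _)])
    ext i j
    exact Complex.ext (by simpa using congrFun₂ hre i j) (by simpa using congrFun₂ him i j)

variable [DecidableEq ι]

theorem spectrum_transpose {R : Type*} [CommRing R] (A : Matrix ι ι R) :
    spectrum R Aᵀ = spectrum R A := by
  ext r
  rw [spectrum.mem_iff, spectrum.mem_iff, ← isUnit_transpose (_ - A), transpose_sub,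
    algebraMap_eq_diagonal, diagonal_transpose]

variable {K : Type*} [Field K]

theorem exists_mulVec_eq_smul_of_mem_spectrum {A : Matrix ι ι K} {μ : K}
    (hμ : μ ∈ spectrum K A) : ∃ v ≠ 0, A *ᵥ v = μ • v := by
  rw [← spectrum_toLin', ← Module.End.hasEigenvalue_iff_mem_spectrum] at hμ
  obtain ⟨v, hv, hv0⟩ := hμ.exists_hasEigenvector
  exact ⟨v, hv0, Module.End.mem_eigenspace_iff.1 hv⟩

variable [IsAlgClosed K]

theorem eq_zero_of_mul_eq_mul_of_disjoint_spectrum {A B X : Matrix ι ι K}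
    (hAB : Disjoint (spectrum K A) (spectrum K B)) (h : A * X = X * B) : X = 0 := by
  have hcop : IsCoprime A.charpoly B.charpoly := by
    refine (isCoprime_iff_aeval_ne_zero_of_isAlgClosed K K _ _).2 fun μ => ?_
    simp only [aeval_def, Algebra.algebraMap_self, eval₂_id, ← not_and_or]
    rintro ⟨hA, hB⟩
    exact Set.disjoint_left.1 hAB (mem_spectrum_iff_isRoot_charpoly.2 hA)
      (mem_spectrum_iff_isRoot_charpoly.2 hB)
  obtain ⟨u, v, huv⟩ := hcop
  have hunit : IsUnit (aeval A B.charpoly) := by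
    have hinv := congrArg (aeval A) huv
    rw [map_add, map_mul, map_mul, aeval_self_charpoly, mul_zero, zero_add, map_one] at hinv
    exact IsUnit.of_mul_eq_one (aeval A v) (by rwa [← map_mul, mul_comm, map_mul])
  refine hunit.mul_left_cancel ?_
  rw [← (SemiconjBy.aeval_right h.symm _).eq, aeval_self_charpoly, mul_zero, mul_zero]

theorem injective_lyapunovMap_iff (A : Matrix ι ι K) :
    Function.Injective (lyapunovMap A) ↔ Disjoint (spectrum K A) (-spectrum K A) := by
  refine ⟨fun hinj => Set.disjoint_left.2 fun μ hμ hμ' => ?_, fun hdisj => ?_⟩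
  · obtain ⟨u, hu0, hu⟩ := exists_mulVec_eq_smul_of_mem_spectrum hμ
    obtain ⟨v, hv0, hv⟩ := exists_mulVec_eq_smul_of_mem_spectrum (Set.mem_neg.1 hμ')
    refine vecMulVec_ne_zero hu0 hv0 (hinj ?_)
    rw [lyapunovMap_vecMulVec hu hv, add_neg_cancel, zero_smul, map_zero]
  · have hneg : -spectrum K A = spectrum K (-Aᵀ) := by
      rw [← spectrum_transpose A, spectrum.neg_eq]
    rw [hneg] at hdisj
    refine (injective_iff_map_eq_zero _).2 fun X hX => ?_
    refine eq_zero_of_mul_eq_mul_of_disjoint_spectrum hdisj ?_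
    rw [mul_neg, eq_neg_iff_add_eq_zero]
    exact hX

end Matrix

theorem isSylvester_iff_disjoint_spectrum_neg {n : ℕ} (A : Matrix (Fin n) (Fin n) ℝ) :
    IsSylvester A ↔
      Disjoint (spectrum ℂ (A.map Complex.ofReal)) (-spectrum ℂ (A.map Complex.ofReal)) := by
  simp only [IsSylvester, Set.disjoint_left, Set.mem_neg]
  refine ⟨fun h μ hμ hμ' => h μ hμ _ hμ' (neg_neg μ).symm, fun h μ hμ ν hν hμν => ?_⟩
  exact h hμ (by rwa [hμν, neg_neg])

theorem lyapunov_existsUnique_iff_sylvester {n : ℕ}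
    (A Q : Matrix (Fin n) (Fin n) ℝ) :
    (∃! X : Matrix (Fin n) (Fin n) ℝ, A * X + X * Aᵀ + Q = 0) ↔ IsSylvester A := by
  rw [isSylvester_iff_disjoint_spectrum_neg, ← injective_lyapunovMap_iff,
    injective_lyapunovMap_map_ofReal_iff]
  exact (lyapunovMap A).existsUnique_add_eq_zero_iff_injective Q
end

section
/- If A is Sylvester and X^Q is the unique solution of A X^Q + X^Q Aᵀ + Q = 0, then for all t₁ ≤ t₂, ∫_{t₁}^{t₂} e^{A t} Q e^{Aᵀ t} dt = e^{A t₁} X^Q e^{Aᵀ t₁} - e^{A t₂} X^Q e^{Aᵀ t₂}. -/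
open Matrix MeasureTheory

/-- `A` is stable (Hurwitz): every complex eigenvalue has negative real part. -/
def IsStableMatrix {n : ℕ} (A : Matrix (Fin n) (Fin n) ℝ) : Prop :=
  ∀ μ ∈ spectrum ℂ (A.map (Complex.ofReal)), μ.re < 0

/-- The matrix exponential `e^{tA}`. -/
noncomputable def mexp {n : ℕ} (A : Matrix (Fin n) (Fin n) ℝ) (t : ℝ) :
    Matrix (Fin n) (Fin n) ℝ :=
  NormedSpace.exp (t • A)

/-!
The Lyapunov equation says exactly that `t ↦ e^{tA} X e^{tAᵀ}` has derivative
`e^{tA} (A X + X Aᵀ) e^{tAᵀ} = -e^{tA} Q e^{tAᵀ}`; the identity is the fundamental theorem of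
calculus for this function, read entrywise.
-/

open NormedSpace in
theorem hasDerivAt_exp_smul_mul_mul_exp_smul {𝕂 𝔸 : Type*} [RCLike 𝕂] [NormedRing 𝔸]
    [NormedAlgebra 𝕂 𝔸] [CompleteSpace 𝔸] (A X B : 𝔸) (t : 𝕂) :
    HasDerivAt (fun u : 𝕂 => exp (u • A) * X * exp (u • B))
      (exp (t • A) * (A * X + X * B) * exp (t • B)) t := by
  convert ((hasDerivAt_exp_smul_const A t).mul_const X).fun_mul
    (hasDerivAt_exp_smul_const' B t) using 1
  noncomm_ring

section MatrixCalculus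

-- Any norm inducing the entrywise topology would do: it only fixes the meaning of `HasDerivAt`.
attribute [local instance] Matrix.linftyOpNormedAddCommGroup Matrix.linftyOpNormedSpace
  Matrix.linftyOpNormedRing Matrix.linftyOpNormedAlgebra

theorem Matrix.of_intervalIntegral_apply_eq_sub {m n : Type*} [Fintype m] [Fintype n]
    {F F' : ℝ → Matrix m n ℝ} (hF : ∀ t, HasDerivAt F (F' t) t) (hF' : Continuous F')
    (a b : ℝ) :
    Matrix.of (fun i j => ∫ t in a..b, F' t i j) = F b - F a := by
  ext i j
  let entry := (Matrix.entryLinearMap ℝ ℝ i j).toContinuousLinearMap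
  exact intervalIntegral.integral_eq_sub_of_hasDerivAt
    (fun t _ => entry.hasFDerivAt.comp_hasDerivAt t (hF t))
    ((entry.continuous.comp hF').intervalIntegrable a b)

theorem hasDerivAt_mexp_mul_mul_mexp_transpose {n : ℕ} (A X : Matrix (Fin n) (Fin n) ℝ)
    (t : ℝ) :
    HasDerivAt (fun u => mexp A u * X * mexp Aᵀ u)
      (mexp A t * (A * X + X * Aᵀ) * mexp Aᵀ t) t :=
  hasDerivAt_exp_smul_mul_mul_exp_smul A X Aᵀ t

theorem continuous_mexp_mul_mul_mexp_transpose {n : ℕ} (A X : Matrix (Fin n) (Fin n) ℝ) :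
    Continuous fun t => mexp A t * X * mexp Aᵀ t :=
  continuous_iff_continuousAt.2 fun t =>
    (hasDerivAt_mexp_mul_mul_mexp_transpose A X t).continuousAt

theorem hasDerivAt_mexp_mul_lyapunov_solution_mul_mexp_transpose {n : ℕ}
    {A Q X : Matrix (Fin n) (Fin n) ℝ} (hX : A * X + X * Aᵀ + Q = 0) (t : ℝ) :
    HasDerivAt (fun u => mexp A u * X * mexp Aᵀ u) (-(mexp A t * Q * mexp Aᵀ t)) t := by
  rw [eq_neg_of_add_eq_zero_right hX, mul_neg, neg_mul, neg_neg]
  exact hasDerivAt_mexp_mul_mul_mexp_transpose A X t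

end MatrixCalculus

theorem finite_integral_eq_lyapunov_solution_general {n : ℕ}
    (A Q X : Matrix (Fin n) (Fin n) ℝ)
    (hX : A * X + X * Aᵀ + Q = 0) (t₁ t₂ : ℝ) :
    (Matrix.of fun i j => ∫ t in t₁..t₂, (mexp A t * Q * mexp Aᵀ t) i j)
      = mexp A t₁ * X * mexp Aᵀ t₁ - mexp A t₂ * X * mexp Aᵀ t₂ := by
  have ftc := Matrix.of_intervalIntegral_apply_eq_sub
    (hasDerivAt_mexp_mul_lyapunov_solution_mul_mexp_transpose hX)
    (continuous_mexp_mul_mul_mexp_transpose A Q).neg t₁ t₂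
  rw [← neg_sub, ← ftc]
  ext i j
  simp only [Matrix.of_apply, Matrix.neg_apply, intervalIntegral.integral_neg, neg_neg]

theorem finite_integral_eq_lyapunov_solution {n : ℕ}
    (A Q X : Matrix (Fin n) (Fin n) ℝ) (hA : IsSylvester A)
    (hX : A * X + X * Aᵀ + Q = 0) (t₁ t₂ : ℝ) (h : t₁ ≤ t₂) :
    (Matrix.of fun i j => ∫ t in t₁..t₂, (mexp A t * Q * mexp Aᵀ t) i j)
      = mexp A t₁ * X * mexp Aᵀ t₁ - mexp A t₂ * X * mexp Aᵀ t₂ :=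
  finite_integral_eq_lyapunov_solution_general A Q X hX t₁ t₂
end

section
/- Let A be Sylvester, let F, G be n×n matrices with A F = F A and Aᵀ G = G Aᵀ. Let X^V solve A X^V + X^V Aᵀ + V = 0 and let X̄^Q solve Aᵀ X̄^Q + X̄^Q A + Q = 0. Then tr(Q F X^V G) = tr(X̄^Q F V G). -/
open Matrix MeasureTheory

/- The Sylvester operators `X ↦ A X + X B` and `Y ↦ B Y + Y A` are adjoint for the pairing
`(Y, X) ↦ tr (Y F X G)` as soon as `F` commutes with `A` and `G` with `B`: the `B`-term moves
across by cyclicity of the trace and past `G`, the `A`-term past `F`. Applied with `B = Aᵀ` to the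
two Lyapunov equations, this is the trace interchange. -/

theorem Matrix.trace_sylvester_mul_eq {ι R : Type*} [Fintype ι] [NonUnitalCommSemiring R]
    (A B F G X Y : Matrix ι ι R) (hF : Commute A F) (hG : Commute B G) :
    ((B * Y + Y * A) * F * X * G).trace = (Y * F * (A * X + X * B) * G).trace := by
  have hB : (B * Y * F * X * G).trace = (Y * F * X * B * G).trace := by
    rw [Matrix.mul_assoc, Matrix.mul_assoc, Matrix.mul_assoc, trace_mul_comm,
      Matrix.mul_assoc, Matrix.mul_assoc, Matrix.mul_assoc, ← hG.eq]
    simp only [Matrix.mul_assoc]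
  have hA : Y * A * F * X * G = Y * F * A * X * G := by
    rw [Matrix.mul_assoc Y A F, hF.eq, ← Matrix.mul_assoc]
  rw [Matrix.add_mul, Matrix.add_mul, Matrix.add_mul, trace_add, hB, hA, Matrix.mul_add,
    Matrix.add_mul, trace_add, add_comm]
  simp only [Matrix.mul_assoc]

theorem trace_interchange_lyapunov_general {n : ℕ}
    (A F G Q V XV XbarQ : Matrix (Fin n) (Fin n) ℝ)
    (hF : A * F = F * A) (hG : Aᵀ * G = G * Aᵀ)
    (hXV : A * XV + XV * Aᵀ + V = 0)
    (hXbarQ : Aᵀ * XbarQ + XbarQ * A + Q = 0) :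
    (Q * F * XV * G).trace = (XbarQ * F * V * G).trace := by
  rw [eq_neg_of_add_eq_zero_right hXbarQ, eq_neg_of_add_eq_zero_right hXV]
  simp only [Matrix.neg_mul, Matrix.mul_neg, trace_neg]
  rw [trace_sylvester_mul_eq A Aᵀ F G XV XbarQ hF hG]

theorem trace_interchange_lyapunov {n : ℕ}
    (A F G Q V XV XbarQ : Matrix (Fin n) (Fin n) ℝ) (hA : IsSylvester A)
    (hF : A * F = F * A) (hG : Aᵀ * G = G * Aᵀ)
    (hXV : A * XV + XV * Aᵀ + V = 0)
    (hXbarQ : Aᵀ * XbarQ + XbarQ * A + Q = 0) :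
    (Q * F * XV * G).trace = (XbarQ * F * V * G).trace :=
  trace_interchange_lyapunov_general A F G Q V XV XbarQ hF hG hXV hXbarQ
end
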